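/- Let K be a field with char(K) ≠ 2 containing a square root i of -1. Then the ring automorphism Ψ∘η of S = K[x_1,...,x_n,y_1,...,y_n], where η(x_j) = x_j + y_j, η(y_j) = x_j - y_j and Ψ(x_j) = x_j + i·y_j, Ψ(y_j) = x_j - i·y_j, maps the parity binomial edge ideal I_G = (x_j x_k - y_j y_k : {j,k} ∈ E(G)) of any graph G on [n] onto the LSS ideal L_G = (x_j x_k + y_j y_k : {j,k} ∈ E(G)). -/
import Mathlib


open MvPolynomial

noncomputable section

/-- The parity binomial edge ideal `I_G = (x_i x_j - y_i y_j : {i,j} ∈ E(G))`. -/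
def parityIdeal {V : Type*} (K : Type*) [Field K] (G : SimpleGraph V) :
    Ideal (MvPolynomial (V ⊕ V) K) :=
  Ideal.span {f | ∃ i j, G.Adj i j ∧
    f = X (Sum.inl i) * X (Sum.inl j) - X (Sum.inr i) * X (Sum.inr j)}

/-- The Lovász–Saks–Schrijver ideal `L_G = (x_i x_j + y_i y_j : {i,j} ∈ E(G))`. -/
def lssIdeal {V : Type*} (K : Type*) [Field K] (G : SimpleGraph V) :
    Ideal (MvPolynomial (V ⊕ V) K) :=
  Ideal.span {f | ∃ i j, G.Adj i j ∧
    f = X (Sum.inl i) * X (Sum.inl j) + X (Sum.inr i) * X (Sum.inr j)}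

/-- If `char K ≠ 2` and `K` contains a square root `ι` of `-1`, then the automorphism
`Ψ ∘ η` (with `η : x_j ↦ x_j + y_j, y_j ↦ x_j - y_j` and
`Ψ : x_j ↦ x_j + ι y_j, y_j ↦ x_j - ι y_j`) maps the parity binomial edge ideal
`I_G` of any graph `G` onto the LSS ideal `L_G`. -/
theorem psi_eta_maps_parityIdeal_to_lssIdeal
    (n : ℕ) (K : Type*) [Field K] (hchar : ringChar K ≠ 2)
    (ι : K) (hι : ι ^ 2 = -1) (G : SimpleGraph (Fin n)) :
    Ideal.map
      ((MvPolynomial.aeval (fun v : Fin n ⊕ Fin n =>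
          match v with
          | Sum.inl i => X (Sum.inl i) + C ι * X (Sum.inr i)
          | Sum.inr i => X (Sum.inl i) - C ι * X (Sum.inr i)) :
        MvPolynomial (Fin n ⊕ Fin n) K →ₐ[K] MvPolynomial (Fin n ⊕ Fin n) K).comp
       (MvPolynomial.aeval (fun v : Fin n ⊕ Fin n =>
          match v with
          | Sum.inl i => X (Sum.inl i) + X (Sum.inr i)
          | Sum.inr i => X (Sum.inl i) - X (Sum.inr i)) :
        MvPolynomial (Fin n ⊕ Fin n) K →ₐ[K] MvPolynomial (Fin n ⊕ Fin n) K))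
      (parityIdeal K G) = lssIdeal K G := by
  set Φ := (((MvPolynomial.aeval (fun v : Fin n ⊕ Fin n =>
          match v with
          | Sum.inl i => X (Sum.inl i) + C ι * X (Sum.inr i)
          | Sum.inr i => X (Sum.inl i) - C ι * X (Sum.inr i)) :
        MvPolynomial (Fin n ⊕ Fin n) K →ₐ[K] MvPolynomial (Fin n ⊕ Fin n) K).comp
       (MvPolynomial.aeval (fun v : Fin n ⊕ Fin n =>
          match v with
          | Sum.inl i => X (Sum.inl i) + X (Sum.inr i)
          | Sum.inr i => X (Sum.inl i) - X (Sum.inr i)) :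
        MvPolynomial (Fin n ⊕ Fin n) K →ₐ[K] MvPolynomial (Fin n ⊕ Fin n) K))) with hΦ
  have h2 : (C ι : MvPolynomial (Fin n ⊕ Fin n) K) ^ 2 = -1 := by
    rw [← map_pow, hι, map_neg, map_one]
  have key : ∀ i j : Fin n,
      Φ (X (Sum.inl i) * X (Sum.inl j) - X (Sum.inr i) * X (Sum.inr j)) =
      C (4 : K) * (X (Sum.inl i) * X (Sum.inl j) + X (Sum.inr i) * X (Sum.inr j)) := by
    intro i j
    simp only [hΦ, AlgHom.coe_comp, Function.comp_apply, map_sub, map_add, map_mul, aeval_X]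
    have : (C (4:K) : MvPolynomial (Fin n ⊕ Fin n) K) = 4 := by
      simp [map_ofNat]
    rw [this]
    linear_combination (-4 * X (Sum.inr i) * X (Sum.inr j) :
      MvPolynomial (Fin n ⊕ Fin n) K) * h2
  have h4 : (4 : K) ≠ 0 := by
    have h2K : (2 : K) ≠ 0 := Ring.two_ne_zero hchar
    have : (4 : K) = 2 * 2 := by norm_num
    rw [this]
    exact mul_ne_zero h2K h2K
  rw [parityIdeal, lssIdeal, Ideal.map_span]
  apply le_antisymm
  · rw [Ideal.span_le]
    rintro f ⟨g, ⟨i, j, hadj, rfl⟩, rfl⟩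
    rw [key i j]
    exact Ideal.mul_mem_left _ _ (Ideal.subset_span ⟨i, j, hadj, rfl⟩)
  · rw [Ideal.span_le]
    rintro f ⟨i, j, hadj, rfl⟩
    have : (X (Sum.inl i) * X (Sum.inl j) + X (Sum.inr i) * X (Sum.inr j) :
        MvPolynomial (Fin n ⊕ Fin n) K) =
        C (4⁻¹ : K) * (C (4 : K) *
          (X (Sum.inl i) * X (Sum.inl j) + X (Sum.inr i) * X (Sum.inr j))) := by
      rw [← mul_assoc, ← map_mul, inv_mul_cancel₀ h4, map_one, one_mul]
    rw [this, ← key i j]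
    exact Ideal.mul_mem_left _ _ (Ideal.subset_span
      ⟨_, ⟨i, j, hadj, rfl⟩, rfl⟩)
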